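/- Let (φ̃,ñ) be a C¹ pair on [0,T]×ℝ² with 1 + εh̃ + ε²φ̃ > 0 everywhere, and set u = (φ̃,ñ₁,ñ₂). Then (φ̃,ñ) solves (S_ε) if and only if u solves the symmetric hyperbolic system A⁰∂_t u + A¹∂_{x₁}u + A²∂_{x₂}u + (1/ε)S¹∂_{x₁}u + (1/ε)S²∂_{x₂}u + (1/ε)u^⊥ = A⁰F. Moreover, at every point A⁰, A¹, A² are symmetric matrices and A⁰ is positive definite. -/

import Mathlib

open MeasureTheory Filter Topology Set Matrix

noncomputable section

/-- The space variable lives in `ℝ² = ℝ × ℝ`. -/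
abbrev Pt : Type := ℝ × ℝ

/-- Partial derivative in the first space direction. -/
def pd1 (f : Pt → ℝ) : Pt → ℝ := fun x => fderiv ℝ f x (1, 0)

/-- Partial derivative in the second space direction. -/
def pd2 (f : Pt → ℝ) : Pt → ℝ := fun x => fderiv ℝ f x (0, 1)

/-- `D^α` for the multi-index `α = (a, b)`. -/
def Dm (a b : ℕ) (f : Pt → ℝ) : Pt → ℝ := pd1^[a] (pd2^[b] f)

/-- Time derivative of a time dependent field. -/
def pdt (f : ℝ → Pt → ℝ) : ℝ → Pt → ℝ := fun t x => deriv (fun τ => f τ x) t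

/-- The `L²(ℝ²)` norm. -/
def L2n (f : Pt → ℝ) : ℝ := (eLpNorm f 2 volume).toReal

/-- Membership in the Sobolev space `H^s(ℝ²)`. -/
def MemHs (s : ℕ) (f : Pt → ℝ) : Prop := ∀ a b : ℕ, a + b ≤ s → MemLp (Dm a b f) 2 volume

/-- The finite set of multi-indices of length at most `s`. -/
def idxs (s : ℕ) : Finset (ℕ × ℕ) :=
  (Finset.range (s + 1) ×ˢ Finset.range (s + 1)).filter fun p => p.1 + p.2 ≤ s

/-- The `H^s(ℝ²)` norm. -/
def sobNorm (s : ℕ) (f : Pt → ℝ) : ℝ := ∑ p ∈ idxs s, L2n (Dm p.1 p.2 f)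

/-- The norm of `(H^s(ℝ²))³`. -/
def sobNorm3 (s : ℕ) (f g h : Pt → ℝ) : ℝ := sobNorm s f + sobNorm s g + sobNorm s h

/-- Membership in `(H^s(ℝ²))³`. -/
def MemHs3 (s : ℕ) (f g h : Pt → ℝ) : Prop := MemHs s f ∧ MemHs s g ∧ MemHs s h

/-- A function `F(t, θ, x)` which is smooth, bounded together with all its
derivatives, and `1`-periodic in `θ`. -/
def SmoothBoundedPeriodic (F : ℝ → ℝ → Pt → ℝ) : Prop :=
  ContDiff ℝ (⊤ : ℕ∞) (fun q : ℝ × ℝ × Pt => F q.1 q.2.1 q.2.2) ∧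
  (∀ n : ℕ, ∃ C : ℝ, ∀ q : ℝ × ℝ × Pt,
    ‖iteratedFDeriv ℝ n (fun q : ℝ × ℝ × Pt => F q.1 q.2.1 q.2.2) q‖ ≤ C) ∧
  (∀ t θ x, F t (θ + 1) x = F t θ x)

/-- The data `M = (M1, M2)`, `𝓗 = Hh` and `W = (W1, W2)` of the problem. -/
structure CoastalData where
  M1 : ℝ → ℝ → Pt → ℝ
  M2 : ℝ → ℝ → Pt → ℝ
  Hh : ℝ → ℝ → Pt → ℝ
  W1 : ℝ → ℝ → Pt → ℝ
  W2 : ℝ → ℝ → Pt → ℝ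

def CoastalData.Good (d : CoastalData) : Prop :=
  SmoothBoundedPeriodic d.M1 ∧ SmoothBoundedPeriodic d.M2 ∧ SmoothBoundedPeriodic d.Hh ∧
    SmoothBoundedPeriodic d.W1 ∧ SmoothBoundedPeriodic d.W2

/-- `m̃₁(t,x) = M₁(t, t/ε, x)`. -/
def CoastalData.m1 (d : CoastalData) (ε t : ℝ) : Pt → ℝ := fun x => d.M1 t (t / ε) x
def CoastalData.m2 (d : CoastalData) (ε t : ℝ) : Pt → ℝ := fun x => d.M2 t (t / ε) x
/-- `h̃(t,x) = 𝓗(t, t/ε, x)`. -/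
def CoastalData.hh (d : CoastalData) (ε t : ℝ) : Pt → ℝ := fun x => d.Hh t (t / ε) x
def CoastalData.w1 (d : CoastalData) (ε t : ℝ) : Pt → ℝ := fun x => d.W1 t (t / ε) x
def CoastalData.w2 (d : CoastalData) (ε t : ℝ) : Pt → ℝ := fun x => d.W2 t (t / ε) x

/-- Average over the fast variable: `F̄(t,x) = ∫₀¹ F(t,θ,x) dθ`. -/
def avg (F : ℝ → ℝ → Pt → ℝ) (t : ℝ) (x : Pt) : ℝ := ∫ θ in (0:ℝ)..(1:ℝ), F t θ x

/-- First equation of `(S_ε)` at `(t,x)`. -/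
def Eq1 (d : CoastalData) (ε : ℝ) (φ n1 n2 : ℝ → Pt → ℝ) (t : ℝ) (x : Pt) : Prop :=
  pdt φ t x
    + (pd1 (d.hh ε t) x * n1 t x + pd2 (d.hh ε t) x * n2 t x)
    + (1 / ε + d.hh ε t x) * (pd1 (n1 t) x + pd2 (n2 t) x)
    + (pd1 (φ t) x * d.m1 ε t x + pd2 (φ t) x * d.m2 ε t x)
    + φ t x * (pd1 (d.m1 ε t) x + pd2 (d.m2 ε t) x)
    + ε * ((pd1 (φ t) x * n1 t x + pd2 (φ t) x * n2 t x)
        + φ t x * (pd1 (n1 t) x + pd2 (n2 t) x)) = 0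

/-- First component of the second (momentum) equation of `(S_ε)` at `(t,x)`. -/
def Eq2 (d : CoastalData) (ε : ℝ) (φ n1 n2 : ℝ → Pt → ℝ) (t : ℝ) (x : Pt) : Prop :=
  pdt n1 t x
    + (pd1 (n1 t) x * d.m1 ε t x + pd2 (n1 t) x * d.m2 ε t x)
    + (pd1 (d.m1 ε t) x * n1 t x + pd2 (d.m1 ε t) x * n2 t x)
    + ε * (pd1 (n1 t) x * n1 t x + pd2 (n1 t) x * n2 t x)
    + (1 / ε) * (-(n2 t x))
    + (1 / ε) * pd1 (φ t) x = d.w1 ε t x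

/-- Second component of the momentum equation of `(S_ε)` at `(t,x)`. -/
def Eq3 (d : CoastalData) (ε : ℝ) (φ n1 n2 : ℝ → Pt → ℝ) (t : ℝ) (x : Pt) : Prop :=
  pdt n2 t x
    + (pd1 (n2 t) x * d.m1 ε t x + pd2 (n2 t) x * d.m2 ε t x)
    + (pd1 (d.m2 ε t) x * n1 t x + pd2 (d.m2 ε t) x * n2 t x)
    + ε * (pd1 (n2 t) x * n1 t x + pd2 (n2 t) x * n2 t x)
    + (1 / ε) * n1 t x
    + (1 / ε) * pd2 (φ t) x = d.w2 ε t x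

/-- `(φ, n1, n2)` solves the system `(S_ε)` on `[0,T] × ℝ²`. -/
def SolvesOn (d : CoastalData) (ε T : ℝ) (φ n1 n2 : ℝ → Pt → ℝ) : Prop :=
  ∀ t ∈ Icc (0 : ℝ) T, ∀ x : Pt,
    Eq1 d ε φ n1 n2 t x ∧ Eq2 d ε φ n1 n2 t x ∧ Eq3 d ε φ n1 n2 t x

/-- `f ∈ C([0,T], H^s(ℝ²))` (with continuous spatial representative). -/
def ContHs (s : ℕ) (T : ℝ) (f : ℝ → Pt → ℝ) : Prop :=
  (∀ t ∈ Icc (0 : ℝ) T, Continuous (f t) ∧ MemHs s (f t)) ∧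
  ∀ t₀ ∈ Icc (0 : ℝ) T,
    Tendsto (fun t => sobNorm s fun x => f t x - f t₀ x) (𝓝[Icc (0 : ℝ) T] t₀) (𝓝 0)

/-- Pointwise differentiability in time on `[0,T]`. -/
def TDiff (T : ℝ) (f : ℝ → Pt → ℝ) : Prop :=
  ∀ t ∈ Icc (0 : ℝ) T, ∀ x, DifferentiableAt ℝ (fun τ => f τ x) t

/-- `f ∈ C¹([0,T], H^s(ℝ²))`: the time derivative exists (in `H^s`, with the
pointwise derivative as representative) and is continuous with values in `H^s`. -/
def C1Hs (s : ℕ) (T : ℝ) (f : ℝ → Pt → ℝ) : Prop :=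
  TDiff T f ∧ ContHs s T (pdt f) ∧
  ∀ t₀ ∈ Icc (0 : ℝ) T,
    Tendsto
      (fun t => sobNorm s (fun x => f t x - f t₀ x - (t - t₀) * pdt f t₀ x) / |t - t₀|)
      (𝓝[Icc (0 : ℝ) T \ {t₀}] t₀) (𝓝 0)

/-- A classical solution of `(S_ε)` on `[0,T]`, belonging to
`C([0,T],(H^s)³) ∩ C¹([0,T],(H^{s-1})³)`. -/
def ClassicalSol (d : CoastalData) (ε : ℝ) (s : ℕ) (T : ℝ) (φ n1 n2 : ℝ → Pt → ℝ) : Prop :=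
  ContHs s T φ ∧ ContHs s T n1 ∧ ContHs s T n2 ∧
    C1Hs (s - 1) T φ ∧ C1Hs (s - 1) T n1 ∧ C1Hs (s - 1) T n2 ∧
    SolvesOn d ε T φ n1 n2

/-- `a = 1 + ε h̃ + ε² φ̃`. -/
def aFun (d : CoastalData) (ε : ℝ) (φ : ℝ → Pt → ℝ) (t : ℝ) (x : Pt) : ℝ :=
  1 + ε * d.hh ε t x + ε ^ 2 * φ t x

/-- `A⁰ = diag(1/(1+εh̃+ε²φ̃), 1, 1)`. -/
def A0 (d : CoastalData) (ε : ℝ) (φ : ℝ → Pt → ℝ) (t : ℝ) (x : Pt) :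
    Matrix (Fin 3) (Fin 3) ℝ :=
  Matrix.diagonal ![1 / aFun d ε φ t x, 1, 1]

/-- `A¹ = diag((m̃₁+εñ₁)/(1+εh̃+ε²φ̃), m̃₁+εñ₁, m̃₁+εñ₁)`. -/
def A1 (d : CoastalData) (ε : ℝ) (φ n1 : ℝ → Pt → ℝ) (t : ℝ) (x : Pt) :
    Matrix (Fin 3) (Fin 3) ℝ :=
  Matrix.diagonal ![(d.m1 ε t x + ε * n1 t x) / aFun d ε φ t x,
    d.m1 ε t x + ε * n1 t x, d.m1 ε t x + ε * n1 t x]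

/-- `A² = diag((m̃₂+εñ₂)/(1+εh̃+ε²φ̃), m̃₂+εñ₂, m̃₂+εñ₂)`. -/
def A2 (d : CoastalData) (ε : ℝ) (φ n2 : ℝ → Pt → ℝ) (t : ℝ) (x : Pt) :
    Matrix (Fin 3) (Fin 3) ℝ :=
  Matrix.diagonal ![(d.m2 ε t x + ε * n2 t x) / aFun d ε φ t x,
    d.m2 ε t x + ε * n2 t x, d.m2 ε t x + ε * n2 t x]

def S1m : Matrix (Fin 3) (Fin 3) ℝ := !![0, 1, 0; 1, 0, 0; 0, 0, 0]
def S2m : Matrix (Fin 3) (Fin 3) ℝ := !![0, 0, 1; 0, 0, 0; 1, 0, 0]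

/-- `u = (φ̃, ñ₁, ñ₂)`. -/
def uVec (φ n1 n2 : ℝ → Pt → ℝ) (t : ℝ) (x : Pt) : Fin 3 → ℝ := ![φ t x, n1 t x, n2 t x]

/-- `u^⊥ = (0, -ñ₂, ñ₁)`. -/
def uPerp (φ n1 n2 : ℝ → Pt → ℝ) (t : ℝ) (x : Pt) : Fin 3 → ℝ := ![0, -(n2 t x), n1 t x]

/-- The right hand side `F`. -/
def Fvec (d : CoastalData) (ε : ℝ) (φ n1 n2 : ℝ → Pt → ℝ) (t : ℝ) (x : Pt) : Fin 3 → ℝ :=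
  ![-(pd1 (d.hh ε t) x * n1 t x + pd2 (d.hh ε t) x * n2 t x)
      - (pd1 (d.m1 ε t) x + pd2 (d.m2 ε t) x) * φ t x,
    d.w1 ε t x - (pd1 (d.m1 ε t) x * n1 t x + pd2 (d.m1 ε t) x * n2 t x),
    d.w2 ε t x - (pd1 (d.m2 ε t) x * n1 t x + pd2 (d.m2 ε t) x * n2 t x)]

/-- `F₀ = A⁰ F`. -/
def F0vec (d : CoastalData) (ε : ℝ) (φ n1 n2 : ℝ → Pt → ℝ) (t : ℝ) (x : Pt) : Fin 3 → ℝ :=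
  (A0 d ε φ t x).mulVec (Fvec d ε φ n1 n2 t x)

def pd1V (v : Pt → Fin 3 → ℝ) : Pt → Fin 3 → ℝ := fun x i => pd1 (fun y => v y i) x
def pd2V (v : Pt → Fin 3 → ℝ) : Pt → Fin 3 → ℝ := fun x i => pd2 (fun y => v y i) x
def DmV (a b : ℕ) (v : Pt → Fin 3 → ℝ) : Pt → Fin 3 → ℝ := fun x i => Dm a b (fun y => v y i) x
def pdtV (v : ℝ → Pt → Fin 3 → ℝ) : ℝ → Pt → Fin 3 → ℝ :=
  fun t x i => deriv (fun τ => v τ x i) t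

/-- Entrywise time derivative of a matrix valued field. -/
def pdtM (A : ℝ → Pt → Matrix (Fin 3) (Fin 3) ℝ) : ℝ → Pt → Matrix (Fin 3) (Fin 3) ℝ :=
  fun t x => Matrix.of fun i j => deriv (fun τ => A τ x i j) t
def pd1M (A : Pt → Matrix (Fin 3) (Fin 3) ℝ) : Pt → Matrix (Fin 3) (Fin 3) ℝ :=
  fun x => Matrix.of fun i j => pd1 (fun y => A y i j) x
def pd2M (A : Pt → Matrix (Fin 3) (Fin 3) ℝ) : Pt → Matrix (Fin 3) (Fin 3) ℝ :=
  fun x => Matrix.of fun i j => pd2 (fun y => A y i j) x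

/-- The symmetric hyperbolic form of the system, with right hand side `G`:
`A⁰∂_t u + A¹∂₁u + A²∂₂u + (1/ε)S¹∂₁u + (1/ε)S²∂₂u + (1/ε)u^⊥ = G`. -/
def SymSolvesOn (d : CoastalData) (ε T : ℝ) (φ n1 n2 : ℝ → Pt → ℝ)
    (G : ℝ → Pt → Fin 3 → ℝ) : Prop :=
  ∀ t ∈ Icc (0 : ℝ) T, ∀ x : Pt,
    (A0 d ε φ t x).mulVec (pdtV (uVec φ n1 n2) t x)
      + (A1 d ε φ n1 t x).mulVec (pd1V (uVec φ n1 n2 t) x)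
      + (A2 d ε φ n2 t x).mulVec (pd2V (uVec φ n1 n2 t) x)
      + (1 / ε) • S1m.mulVec (pd1V (uVec φ n1 n2 t) x)
      + (1 / ε) • S2m.mulVec (pd2V (uVec φ n1 n2 t) x)
      + (1 / ε) • uPerp φ n1 n2 t x
    = G t x

/-- The commutator `[D^α, A⁰∂_t]u = D^α(A⁰∂_t u) - A⁰∂_t(D^α u)`. -/
def commA0 (d : CoastalData) (ε : ℝ) (φ n1 n2 : ℝ → Pt → ℝ) (a b : ℕ) (t : ℝ) (x : Pt) :
    Fin 3 → ℝ :=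
  DmV a b (fun y => (A0 d ε φ t y).mulVec (pdtV (uVec φ n1 n2) t y)) x
    - (A0 d ε φ t x).mulVec (pdtV (fun τ => DmV a b (uVec φ n1 n2 τ)) t x)

/-- The commutator `[D^α, A¹∂_{x₁}]u`. -/
def commA1 (d : CoastalData) (ε : ℝ) (φ n1 n2 : ℝ → Pt → ℝ) (a b : ℕ) (t : ℝ) (x : Pt) :
    Fin 3 → ℝ :=
  DmV a b (fun y => (A1 d ε φ n1 t y).mulVec (pd1V (uVec φ n1 n2 t) y)) x
    - (A1 d ε φ n1 t x).mulVec (pd1V (DmV a b (uVec φ n1 n2 t)) x)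

/-- The commutator `[D^α, A²∂_{x₂}]u`. -/
def commA2 (d : CoastalData) (ε : ℝ) (φ n1 n2 : ℝ → Pt → ℝ) (a b : ℕ) (t : ℝ) (x : Pt) :
    Fin 3 → ℝ :=
  DmV a b (fun y => (A2 d ε φ n2 t y).mulVec (pd2V (uVec φ n1 n2 t) y)) x
    - (A2 d ε φ n2 t x).mulVec (pd2V (DmV a b (uVec φ n1 n2 t)) x)

/-- `F^α = D^α F₀ - [D^α, A⁰∂_t]u - [D^α, A¹∂₁]u - [D^α, A²∂₂]u`. -/
def Falpha (d : CoastalData) (ε : ℝ) (φ n1 n2 : ℝ → Pt → ℝ) (a b : ℕ) (t : ℝ) (x : Pt) :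
    Fin 3 → ℝ :=
  DmV a b (F0vec d ε φ n1 n2 t) x - commA0 d ε φ n1 n2 a b t x
    - commA1 d ε φ n1 n2 a b t x - commA2 d ε φ n1 n2 a b t x

/-- A smooth compactly supported test function on `ℝ × ℝ²`. -/
def IsTest (ψ : ℝ → Pt → ℝ) : Prop :=
  ContDiff ℝ (⊤ : ℕ∞) (fun p : ℝ × Pt => ψ p.1 p.2) ∧
    HasCompactSupport (fun p : ℝ × Pt => ψ p.1 p.2)

/-- A smooth test function compactly supported in `(0,T) × ℝ²`. -/
def IsTestIn (T : ℝ) (ψ : ℝ → Pt → ℝ) : Prop :=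
  IsTest ψ ∧ ∀ t, t ∉ Ioo (0 : ℝ) T → ∀ x, ψ t x = 0

/-- The pairing `∫₀^T ∫_{ℝ²} f ψ dx dt`. -/
def pairT (T : ℝ) (f ψ : ℝ → Pt → ℝ) : ℝ :=
  ∫ t in Icc (0 : ℝ) T, ∫ x : Pt, f t x * ψ t x

/-- The energy `∫ A⁰ D^α v · D^α v dx` at time `t`. -/
def energyInt (d : CoastalData) (ε : ℝ) (φ : ℝ → Pt → ℝ) (a b : ℕ)
    (v : ℝ → Pt → Fin 3 → ℝ) (t : ℝ) : ℝ :=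
  ∫ x : Pt, (A0 d ε φ t x).mulVec (DmV a b (v t) x) ⬝ᵥ DmV a b (v t) x

/-- The weak (distributional) formulation on `(0,T) × ℝ²` of the effective equation
for the profile `𝓘`. -/
def EffWeak (d : CoastalData) (T : ℝ) (I : ℝ → Pt → ℝ) : Prop :=
  ∀ ψ : ℝ → Pt → ℝ, IsTestIn T ψ →
    (∫ t in Icc (0 : ℝ) T, ∫ x : Pt,
      (-(I t x - (pd1 (pd1 (I t)) x + pd2 (pd2 (I t)) x)) * pdt ψ t x
        + (avg d.M1 t x * pd1 (I t) x + avg d.M2 t x * pd2 (I t) x) * ψ t x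
        + avg d.M1 t x * pd1 (pd1 (I t)) x * pd1 (ψ t) x
        + avg d.M2 t x * pd1 (pd2 (I t)) x * pd1 (ψ t) x
        + avg d.M1 t x * pd1 (pd2 (I t)) x * pd2 (ψ t) x
        + avg d.M2 t x * pd2 (pd2 (I t)) x * pd2 (ψ t) x
        - (-(pd2 (avg d.Hh t) x) * pd1 (I t) x + pd1 (avg d.Hh t) x * pd2 (I t) x) * ψ t x
        + (pd1 (avg d.M1 t) x + pd2 (avg d.M2 t) x) * I t x * ψ t x
        - pd1 (avg d.M2 t) x * pd2 (I t) x * pd1 (ψ t) x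
        + pd2 (avg d.M2 t) x * pd1 (I t) x * pd1 (ψ t) x
        + pd1 (avg d.M1 t) x * pd2 (I t) x * pd2 (ψ t) x
        - pd2 (avg d.M1 t) x * pd1 (I t) x * pd2 (ψ t) x))
    = ∫ t in Icc (0 : ℝ) T, ∫ x : Pt, (pd2 (avg d.W1 t) x - pd1 (avg d.W2 t) x) * ψ t x

/-- The initial condition `(𝓘 - Δ𝓘)|_{t=0} = φ̃₀ + ∂₁(ñ₀)₁ - ∂₂(ñ₀)₂`. -/
def EffInit (I : ℝ → Pt → ℝ) (φ0 n10 n20 : Pt → ℝ) : Prop :=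
  ∀ x, I 0 x - (pd1 (pd1 (I 0)) x + pd2 (pd2 (I 0)) x) = φ0 x + pd1 n10 x - pd2 n20 x

/-- A classical solution with prescribed initial data. -/
def SolWithData (d : CoastalData) (ε : ℝ) (s : ℕ) (T : ℝ) (φ0 n10 n20 : Pt → ℝ)
    (φ n1 n2 : ℝ → Pt → ℝ) : Prop :=
  ClassicalSol d ε s T φ n1 n2 ∧ φ 0 = φ0 ∧ n1 0 = n10 ∧ n2 0 = n20


section Aux
variable (φ n1 n2 : ℝ → Pt → ℝ) (t : ℝ) (x : Pt)

lemma pd1V_uVec : pd1V (uVec φ n1 n2 t) x = ![pd1 (φ t) x, pd1 (n1 t) x, pd1 (n2 t) x] := by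
  funext i; fin_cases i <;> rfl

lemma pd2V_uVec : pd2V (uVec φ n1 n2 t) x = ![pd2 (φ t) x, pd2 (n1 t) x, pd2 (n2 t) x] := by
  funext i; fin_cases i <;> rfl

lemma pdtV_uVec : pdtV (uVec φ n1 n2) t x = ![pdt φ t x, pdt n1 t x, pdt n2 t x] := by
  funext i; fin_cases i <;> rfl

end Aux

end
/-- equivalence of `(S_ε)` with the symmetric hyperbolic system,
symmetry of `A⁰, A¹, A²` and positive definiteness of `A⁰`. -/
theorem symmetric_hyperbolic_form (d : CoastalData) (hd : d.Good) (ε : ℝ)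
    (hε : ε ∈ Ioc (0 : ℝ) 1) (T : ℝ) (hT : 0 < T) (φ n1 n2 : ℝ → Pt → ℝ)
    (hreg : ContDiff ℝ 1 (fun p : ℝ × Pt => φ p.1 p.2) ∧
      ContDiff ℝ 1 (fun p : ℝ × Pt => n1 p.1 p.2) ∧
      ContDiff ℝ 1 (fun p : ℝ × Pt => n2 p.1 p.2))
    (hpos : ∀ t ∈ Icc (0 : ℝ) T, ∀ x : Pt, 0 < aFun d ε φ t x) :
    (SolvesOn d ε T φ n1 n2 ↔ SymSolvesOn d ε T φ n1 n2 (F0vec d ε φ n1 n2)) ∧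
    (∀ t ∈ Icc (0 : ℝ) T, ∀ x : Pt,
      (A0 d ε φ t x).IsSymm ∧ (A1 d ε φ n1 t x).IsSymm ∧ (A2 d ε φ n2 t x).IsSymm ∧
        (A0 d ε φ t x).PosDef) := by

  obtain ⟨hε0, -⟩ := hε
  have hεne : ε ≠ 0 := ne_of_gt hε0
  have hE : ε * ε⁻¹ = 1 := mul_inv_cancel₀ hεne
  have keyiff : ∀ t ∈ Icc (0 : ℝ) T, ∀ x : Pt,
      (Eq1 d ε φ n1 n2 t x ∧ Eq2 d ε φ n1 n2 t x ∧ Eq3 d ε φ n1 n2 t x) ↔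
      ((A0 d ε φ t x).mulVec (pdtV (uVec φ n1 n2) t x)
        + (A1 d ε φ n1 t x).mulVec (pd1V (uVec φ n1 n2 t) x)
        + (A2 d ε φ n2 t x).mulVec (pd2V (uVec φ n1 n2 t) x)
        + (1 / ε) • S1m.mulVec (pd1V (uVec φ n1 n2 t) x)
        + (1 / ε) • S2m.mulVec (pd2V (uVec φ n1 n2 t) x)
        + (1 / ε) • uPerp φ n1 n2 t x
      = F0vec d ε φ n1 n2 t x) := by
    intro t ht x
    have ha : aFun d ε φ t x ≠ 0 := (hpos t ht x).ne'
    unfold aFun at ha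
    have hA : (1 + ε * d.hh ε t x + ε ^ 2 * φ t x) *
        (1 + ε * d.hh ε t x + ε ^ 2 * φ t x)⁻¹ = 1 := mul_inv_cancel₀ ha
    constructor
    · rintro ⟨e1, e2, e3⟩
      unfold Eq1 at e1; unfold Eq2 at e2; unfold Eq3 at e3
      funext i
      fin_cases i <;>
        simp [pd1V_uVec, pd2V_uVec, pdtV_uVec, A0, A1, A2, S1m, S2m, F0vec, Fvec,
          uPerp, aFun, Matrix.mulVec_diagonal, Matrix.mulVec, dotProduct,
          Fin.sum_univ_three]
      · linear_combination (1 + ε * d.hh ε t x + ε ^ 2 * φ t x)⁻¹ * e1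
          - ε⁻¹ * (pd1 (n1 t) x + pd2 (n2 t) x) * hA
          + (d.hh ε t x + ε * φ t x) * (1 + ε * d.hh ε t x + ε ^ 2 * φ t x)⁻¹
              * (pd1 (n1 t) x + pd2 (n2 t) x) * hE
      · linear_combination e2
      · linear_combination e3
    · intro hv
      have h0 := congrFun hv 0
      have h1 := congrFun hv 1
      have h2 := congrFun hv 2
      simp [pd1V_uVec, pd2V_uVec, pdtV_uVec, A0, A1, A2, S1m, S2m, F0vec, Fvec,
        uPerp, aFun, Matrix.mulVec_diagonal, Matrix.mulVec, dotProduct,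
        Fin.sum_univ_three] at h0 h1 h2
      refine ⟨?_, ?_, ?_⟩
      · unfold Eq1
        linear_combination (1 + ε * d.hh ε t x + ε ^ 2 * φ t x) * h0
          - (pdt φ t x + pd1 (φ t) x * (d.m1 ε t x + ε * n1 t x)
              + pd2 (φ t) x * (d.m2 ε t x + ε * n2 t x)
              + pd1 (d.hh ε t) x * n1 t x + pd2 (d.hh ε t) x * n2 t x
              + φ t x * (pd1 (d.m1 ε t) x + pd2 (d.m2 ε t) x)) * hA
          - (d.hh ε t x + ε * φ t x) * (pd1 (n1 t) x + pd2 (n2 t) x) * hE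
      · unfold Eq2; linear_combination h1
      · unfold Eq3; linear_combination h2
  refine ⟨⟨fun hsol t ht x => (keyiff t ht x).mp (hsol t ht x),
      fun hsol t ht x => (keyiff t ht x).mpr (hsol t ht x)⟩, fun t ht x => ?_⟩
  refine ⟨Matrix.isSymm_diagonal _, Matrix.isSymm_diagonal _, Matrix.isSymm_diagonal _, ?_⟩
  refine Matrix.posDef_diagonal_iff.mpr fun i => ?_
  fin_cases i <;> simp
  exact hpos t ht x
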